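/- arXiv:2211.14265 — 3 statements merged into one kernel-verified Lean document; each statement's English description precedes it below -/
import Mathlib

section
/- Let m ∈ ℕ and T > 0. Let f : [0,T] → V be m times continuously differentiable and let u : [0,T] → V be (m+2) times continuously differentiable and satisfy M u^{(m+2)}(t) + K u^{(m)}(t) = M f^{(m)}(t) for all t ∈ [0,T]. Then for every t ∈ [0,T], |u^{(m+1)}(t)|_M + |u^{(m)}(t)|_K ≤ 2√2 ( |u^{(m+1)}(0)|_M + |u^{(m)}(0)|_K + 2 ∫₀^T |f^{(m)}(s)|_M ds ). -/
/-!
The energy `E = |u^{(m+1)}|_M² + |u^{(m)}|_K²` of the differentiated equation satisfies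
`E' = 2⟪M f^{(m)}, u^{(m+1)}⟫ ≤ 2 |f^{(m)}|_M √E` by symmetry of `M`, `K` and Cauchy–Schwarz for
`M`, so `√E` grows by at most `∫ |f^{(m)}|_M`. Comparing `√E` with the sum of the two seminorms
costs the factor `√2`.
-/

open scoped RealInnerProductSpace

/-- The (semi)norm `|v|_A := ⟨A v, v⟩^{1/2}` induced by a (positive semidefinite
self-adjoint) linear operator `A`. -/
noncomputable def opSemiNorm {V : Type*} [NormedAddCommGroup V] [InnerProductSpace ℝ V]
    (A : V →ₗ[ℝ] V) (v : V) : ℝ :=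
  Real.sqrt ⟪A v, v⟫

open Set MeasureTheory

theorem sqrt_le_sqrt_add_integral_of_hasDerivAt {E E' g : ℝ → ℝ} {a b : ℝ} (hab : a ≤ b)
    (hE : ∀ t ∈ Icc a b, HasDerivAt E (E' t) t) (hE_nonneg : ∀ t ∈ Icc a b, 0 ≤ E t)
    (hg : IntegrableOn g (Icc a b)) (hg_nonneg : ∀ t ∈ Ioo a b, 0 ≤ g t)
    (hE' : ∀ t ∈ Ioo a b, E' t ≤ 2 * g t * √(E t)) :
    √(E b) ≤ √(E a) + ∫ t in a..b, g t := by
  -- `√E` need not be differentiable where `E` vanishes, so work with `√(E + ε²)`.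
  have regularized : ∀ ε > 0, √(E b + ε ^ 2) - √(E a + ε ^ 2) ≤ ∫ t in a..b, g t := by
    intro ε hε
    have hpos : ∀ t ∈ Icc a b, 0 < E t + ε ^ 2 := fun t ht ↦
      add_pos_of_nonneg_of_pos (hE_nonneg t ht) (by positivity)
    have hderiv : ∀ t ∈ Icc a b, HasDerivAt (fun s ↦ √(E s + ε ^ 2))
        (E' t / (2 * √(E t + ε ^ 2))) t := fun t ht ↦
      ((hE t ht).add_const _).sqrt (hpos t ht).ne'
    refine intervalIntegral.sub_le_integral_of_hasDeriv_right_of_le hab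
      (fun t ht ↦ (hderiv t ht).continuousAt.continuousWithinAt)
      (fun t ht ↦ (hderiv t (Ioo_subset_Icc_self ht)).hasDerivWithinAt) hg fun t ht ↦ ?_
    have hsqrt : √(E t) ≤ √(E t + ε ^ 2) := Real.sqrt_le_sqrt (by nlinarith)
    rw [div_le_iff₀ (by have := hpos t (Ioo_subset_Icc_self ht); positivity)]
    calc E' t ≤ 2 * g t * √(E t) := hE' t ht
      _ ≤ g t * (2 * √(E t + ε ^ 2)) := by nlinarith [hg_nonneg t ht]
  refine le_of_forall_pos_le_add fun ε hε ↦ ?_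
  have hb : √(E b) ≤ √(E b + ε ^ 2) := Real.sqrt_le_sqrt (by nlinarith)
  have ha : √(E a + ε ^ 2) ≤ √(E a) + ε := by
    rw [Real.sqrt_le_left (by positivity), add_sq, Real.sq_sqrt (hE_nonneg a ⟨le_rfl, hab⟩)]
    nlinarith [Real.sqrt_nonneg (E a)]
  linarith [regularized ε hε]

theorem add_le_sqrt_two_mul_sqrt_sq_add_sq (x y : ℝ) : x + y ≤ √2 * √(x ^ 2 + y ^ 2) := by
  rw [← Real.sqrt_mul zero_le_two]
  exact (le_abs_self _).trans (Real.abs_le_sqrt (by nlinarith [sq_nonneg (x - y)]))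

theorem sqrt_sq_add_sq_le_add {x y : ℝ} (hx : 0 ≤ x) (hy : 0 ≤ y) : √(x ^ 2 + y ^ 2) ≤ x + y := by
  rw [Real.sqrt_le_left (by positivity)]
  nlinarith

theorem ContDiff.hasDerivAt_iteratedDeriv {F : Type*} [NormedAddCommGroup F] [NormedSpace ℝ F]
    {n : WithTop ℕ∞} {u : ℝ → F} (hu : ContDiff ℝ n u) {k : ℕ} (hk : k < n) (t : ℝ) :
    HasDerivAt (iteratedDeriv k u) (iteratedDeriv (k + 1) u t) t := by
  rw [iteratedDeriv_succ]
  exact (hu.differentiable_iteratedDeriv k hk t).hasDerivAt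

section

variable {V : Type*} [NormedAddCommGroup V] [InnerProductSpace ℝ V]

theorem opSemiNorm_nonneg (A : V →ₗ[ℝ] V) (x : V) : 0 ≤ opSemiNorm A x :=
  Real.sqrt_nonneg _

theorem LinearMap.IsPositive.inner_apply_sq_le {A : V →ₗ[ℝ] V} (hA : A.IsPositive) (x y : V) :
    ⟪A x, y⟫ ^ 2 ≤ ⟪A x, x⟫ * ⟪A y, y⟫ := by
  have hquad : ∀ t : ℝ, 0 ≤ ⟪A y, y⟫ * (t * t) + 2 * ⟪A x, y⟫ * t + ⟪A x, x⟫ := fun t ↦ by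
    have h := hA.inner_nonneg_left (x + t • y)
    rw [map_add, map_smul, inner_add_left, inner_add_right, inner_add_right, real_inner_smul_left,
      real_inner_smul_left, real_inner_smul_right, real_inner_smul_right, hA.isSymmetric y x,
      real_inner_comm (A x) y] at h
    linarith
  have := discrim_le_zero hquad
  rw [discrim] at this
  nlinarith

theorem LinearMap.IsPositive.sq_opSemiNorm {A : V →ₗ[ℝ] V} (hA : A.IsPositive) (x : V) :
    opSemiNorm A x ^ 2 = ⟪A x, x⟫ :=
  Real.sq_sqrt (hA.inner_nonneg_left x)

theorem LinearMap.IsPositive.inner_apply_le_opSemiNorm_mul {A : V →ₗ[ℝ] V} (hA : A.IsPositive)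
    (x y : V) : ⟪A x, y⟫ ≤ opSemiNorm A x * opSemiNorm A y := by
  rw [opSemiNorm, opSemiNorm, ← Real.sqrt_mul (hA.inner_nonneg_left x)]
  exact (le_abs_self _).trans (Real.abs_le_sqrt (hA.inner_apply_sq_le x y))

theorem HasDerivAt.inner_apply_self [FiniteDimensional ℝ V] {A : V →ₗ[ℝ] V} (hA : A.IsSymmetric)
    {x : ℝ → V} {x' : V} {t : ℝ} (hx : HasDerivAt x x' t) :
    HasDerivAt (fun s ↦ ⟪A (x s), x s⟫) (2 * ⟪A (x t), x'⟫) t := by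
  have hAx : HasDerivAt (fun s ↦ A (x s)) (A x') t :=
    (LinearMap.toContinuousLinearMap A).hasFDerivAt.comp_hasDerivAt t hx
  refine (hAx.inner ℝ hx).congr_deriv ?_
  rw [hA, real_inner_comm]
  ring

theorem ContinuousOn.opSemiNorm [FiniteDimensional ℝ V] (A : V →ₗ[ℝ] V) {g : ℝ → V} {s : Set ℝ}
    (hg : ContinuousOn g s) : ContinuousOn (fun t ↦ opSemiNorm A (g t)) s :=
  Real.continuous_sqrt.comp_continuousOn
    ((A.continuous_of_finiteDimensional.comp_continuousOn hg).inner hg)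

theorem sqrt_energy_le_add_integral_forcing [FiniteDimensional ℝ V] {M K : V →ₗ[ℝ] V}
    (hM : M.IsPositive) (hK : K.IsPositive) {v w acc g : ℝ → V} {a b : ℝ} (hab : a ≤ b)
    (hv : ∀ t ∈ Icc a b, HasDerivAt v (w t) t) (hw : ∀ t ∈ Icc a b, HasDerivAt w (acc t) t)
    (hg : ContinuousOn g (Icc a b)) (heq : ∀ t ∈ Icc a b, M (acc t) + K (v t) = M (g t)) :
    √(opSemiNorm M (w b) ^ 2 + opSemiNorm K (v b) ^ 2) ≤
      √(opSemiNorm M (w a) ^ 2 + opSemiNorm K (v a) ^ 2) + ∫ t in a..b, opSemiNorm M (g t) := by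
  simp only [hM.sq_opSemiNorm, hK.sq_opSemiNorm]
  refine sqrt_le_sqrt_add_integral_of_hasDerivAt hab
    (fun t ht ↦ ((hw t ht).inner_apply_self hM.isSymmetric).add
      ((hv t ht).inner_apply_self hK.isSymmetric))
    (fun t _ ↦ add_nonneg (hM.inner_nonneg_left _) (hK.inner_nonneg_left _))
    ((hg.opSemiNorm M).integrableOn_compact isCompact_Icc) (fun t _ ↦ Real.sqrt_nonneg _)
    fun t ht ↦ ?_
  have hwE : opSemiNorm M (w t) ≤ √(⟪M (w t), w t⟫ + ⟪K (v t), v t⟫) :=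
    Real.sqrt_le_sqrt (le_add_of_nonneg_right (hK.inner_nonneg_left _))
  calc 2 * ⟪M (w t), acc t⟫ + 2 * ⟪K (v t), w t⟫ = 2 * ⟪M (g t), w t⟫ := by
        rw [← heq t (Ioo_subset_Icc_self ht), inner_add_left, hM.isSymmetric, real_inner_comm]
        ring
    _ ≤ 2 * (opSemiNorm M (g t) * opSemiNorm M (w t)) := by
        gcongr
        exact hM.inner_apply_le_opSemiNorm_mul _ _
    _ ≤ 2 * opSemiNorm M (g t) * √(⟪M (w t), w t⟫ + ⟪K (v t), v t⟫) := by
        rw [← mul_assoc]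
        exact mul_le_mul_of_nonneg_left hwE (mul_nonneg zero_le_two (opSemiNorm_nonneg _ _))

end

theorem stmt1_general {V : Type*} [NormedAddCommGroup V] [InnerProductSpace ℝ V]
    [FiniteDimensional ℝ V]
    (M K : V →ₗ[ℝ] V)
    (hMsa : ∀ x y : V, ⟪M x, y⟫ = ⟪x, M y⟫)
    (hMpd : ∀ x : V, x ≠ 0 → 0 < ⟪M x, x⟫)
    (hKsa : ∀ x y : V, ⟪K x, y⟫ = ⟪x, K y⟫)
    (hKpsd : ∀ x : V, 0 ≤ ⟪K x, x⟫)
    (m : ℕ) (T : ℝ)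
    (f u : ℝ → V)
    (hf : ContDiff ℝ m f) (hu : ContDiff ℝ (m + 2) u)
    (heq : ∀ t ∈ Set.Icc (0 : ℝ) T,
      M (iteratedDeriv (m + 2) u t) + K (iteratedDeriv m u t) = M (iteratedDeriv m f t)) :
    ∀ t ∈ Set.Icc (0 : ℝ) T,
      opSemiNorm M (iteratedDeriv (m + 1) u t) + opSemiNorm K (iteratedDeriv m u t) ≤
        2 * Real.sqrt 2 *
          (opSemiNorm M (iteratedDeriv (m + 1) u 0) + opSemiNorm K (iteratedDeriv m u 0) +
            2 * ∫ s in (0 : ℝ)..T, opSemiNorm M (iteratedDeriv m f s)) := by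
  intro t ht
  have hM : M.IsPositive := (M.isPositive_iff).2 ⟨hMsa, fun x ↦ by
    rcases eq_or_ne x 0 with rfl | hx
    · simp
    · exact (hMpd x hx).le⟩
  have hK : K.IsPositive := (K.isPositive_iff).2 ⟨hKsa, hKpsd⟩
  have hlt : ∀ k ≤ m + 1, (k : WithTop ℕ∞) < m + 2 := fun k hk ↦ by
    exact_mod_cast (by omega : k < m + 2)
  have hf_cont := hf.continuous_iteratedDeriv m le_rfl
  have henergy := sqrt_energy_le_add_integral_forcing hM hK ht.1
    (fun s _ ↦ hu.hasDerivAt_iteratedDeriv (hlt m m.le_succ) s)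
    (fun s _ ↦ hu.hasDerivAt_iteratedDeriv (hlt (m + 1) le_rfl) s) hf_cont.continuousOn
    (fun s hs ↦ heq s ⟨hs.1, hs.2.trans ht.2⟩)
  set A := opSemiNorm M (iteratedDeriv (m + 1) u 0)
  set B := opSemiNorm K (iteratedDeriv m u 0)
  set F := fun s ↦ opSemiNorm M (iteratedDeriv m f s)
  have hA : 0 ≤ A := opSemiNorm_nonneg _ _
  have hB : 0 ≤ B := opSemiNorm_nonneg _ _
  have hF_nonneg : 0 ≤ ∫ s in (0 : ℝ)..t, F s :=
    intervalIntegral.integral_nonneg ht.1 fun _ _ ↦ opSemiNorm_nonneg _ _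
  have hF_mono : ∫ s in (0 : ℝ)..t, F s ≤ ∫ s in (0 : ℝ)..T, F s :=
    intervalIntegral.integral_mono_interval le_rfl ht.1 ht.2
      (Filter.Eventually.of_forall fun _ ↦ opSemiNorm_nonneg _ _)
      (hf_cont.continuousOn.opSemiNorm M).intervalIntegrable
  calc _ ≤ √2 * √(opSemiNorm M (iteratedDeriv (m + 1) u t) ^ 2 +
        opSemiNorm K (iteratedDeriv m u t) ^ 2) := add_le_sqrt_two_mul_sqrt_sq_add_sq _ _
    _ ≤ √2 * (A + B + ∫ s in (0 : ℝ)..t, F s) := by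
        gcongr
        linarith [sqrt_sq_add_sq_le_add hA hB]
    _ ≤ 2 * √2 * (A + B + 2 * ∫ s in (0 : ℝ)..T, F s) := by nlinarith [Real.sqrt_nonneg 2]

/-- regularity estimate (Lemma 3.1 of the paper): if
`M u^{(m+2)} + K u^{(m)} = M f^{(m)}` on `[0,T]`, then
`|u^{(m+1)}(t)|_M + |u^{(m)}(t)|_K ≤ 2√2 (|u^{(m+1)}(0)|_M + |u^{(m)}(0)|_K + 2∫₀^T |f^{(m)}|_M)`. -/
theorem stmt1 {V : Type*} [NormedAddCommGroup V] [InnerProductSpace ℝ V]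
    [FiniteDimensional ℝ V]
    (M K : V →ₗ[ℝ] V)
    (hMsa : ∀ x y : V, ⟪M x, y⟫ = ⟪x, M y⟫)
    (hMpd : ∀ x : V, x ≠ 0 → 0 < ⟪M x, x⟫)
    (hKsa : ∀ x y : V, ⟪K x, y⟫ = ⟪x, K y⟫)
    (hKpsd : ∀ x : V, 0 ≤ ⟪K x, x⟫)
    (m : ℕ) (T : ℝ) (hT : 0 < T)
    (f u : ℝ → V)
    (hf : ContDiff ℝ m f) (hu : ContDiff ℝ (m + 2) u)
    (heq : ∀ t ∈ Set.Icc (0 : ℝ) T,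
      M (iteratedDeriv (m + 2) u t) + K (iteratedDeriv m u t) = M (iteratedDeriv m f t)) :
    ∀ t ∈ Set.Icc (0 : ℝ) T,
      opSemiNorm M (iteratedDeriv (m + 1) u t) + opSemiNorm K (iteratedDeriv m u t) ≤
        2 * Real.sqrt 2 *
          (opSemiNorm M (iteratedDeriv (m + 1) u 0) + opSemiNorm K (iteratedDeriv m u 0) +
            2 * ∫ s in (0 : ℝ)..T, opSemiNorm M (iteratedDeriv m f s)) :=
  stmt1_general M K hMsa hMpd hKsa hKpsd m T f u hf hu heq
end

section
/- Let τ > 0 and let (u^n)_{n≥0} be a sequence in V satisfying the homogeneous scheme M (u^{n+1} − 2u^n + u^{n−1})/τ² + K (u^{n+1} + 2u^n + u^{n−1})/4 = 0 for every n ≥ 1. Then the discrete energy is conserved: for every n ≥ 0, |∂_t u^n|_M² + |u^{n+1/2}|_K² = |∂_t u^0|_M² + |u^{1/2}|_K². -/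
open scoped RealInnerProductSpace

private lemma cross_sub' {V : Type*} [NormedAddCommGroup V] [InnerProductSpace ℝ V]
    (A : V →ₗ[ℝ] V) (hA : ∀ x y : V, ⟪A x, y⟫ = ⟪x, A y⟫) (x y : V) :
    ⟪A (x - y), x + y⟫ = ⟪A x, x⟫ - ⟪A y, y⟫ := by
  have h1 : ⟪A x, y⟫ = ⟪A y, x⟫ := by rw [hA x y, real_inner_comm]
  simp only [map_sub, inner_sub_left, inner_add_right]
  linarith

private lemma cross_add' {V : Type*} [NormedAddCommGroup V] [InnerProductSpace ℝ V]
    (A : V →ₗ[ℝ] V) (hA : ∀ x y : V, ⟪A x, y⟫ = ⟪x, A y⟫) (x y : V) :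
    ⟪A (x + y), x - y⟫ = ⟪A x, x⟫ - ⟪A y, y⟫ := by
  have h1 : ⟪A x, y⟫ = ⟪A y, x⟫ := by rw [hA x y, real_inner_comm]
  simp only [map_add, inner_add_left, inner_sub_right]
  linarith

/-- discrete energy conservation for the homogeneous scheme
`M (u^{n+1} − 2u^n + u^{n−1})/τ² + K (u^{n+1} + 2u^n + u^{n−1})/4 = 0`. -/
theorem stmt2 {V : Type*} [NormedAddCommGroup V] [InnerProductSpace ℝ V]
    [FiniteDimensional ℝ V]
    (M K : V →ₗ[ℝ] V)
    (hMsa : ∀ x y : V, ⟪M x, y⟫ = ⟪x, M y⟫)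
    (hMpd : ∀ x : V, x ≠ 0 → 0 < ⟪M x, x⟫)
    (hKsa : ∀ x y : V, ⟪K x, y⟫ = ⟪x, K y⟫)
    (hKpsd : ∀ x : V, 0 ≤ ⟪K x, x⟫)
    (τ : ℝ) (hτ : 0 < τ) (u : ℕ → V)
    (hscheme : ∀ n : ℕ, 1 ≤ n →
      M ((τ ^ 2)⁻¹ • (u (n + 1) - (2 : ℝ) • u n + u (n - 1))) +
        K ((4 : ℝ)⁻¹ • (u (n + 1) + (2 : ℝ) • u n + u (n - 1))) = 0) :
    ∀ n : ℕ,
      opSemiNorm M (τ⁻¹ • (u (n + 1) - u n)) ^ 2 +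
          opSemiNorm K ((2 : ℝ)⁻¹ • (u (n + 1) + u n)) ^ 2 =
        opSemiNorm M (τ⁻¹ • (u 1 - u 0)) ^ 2 +
          opSemiNorm K ((2 : ℝ)⁻¹ • (u 1 + u 0)) ^ 2 := by
  have hMnn : ∀ x : V, 0 ≤ ⟪M x, x⟫ := by
    intro x
    by_cases h : x = 0
    · simp [h]
    · exact (hMpd x h).le
  have hsmul : ∀ (A : V →ₗ[ℝ] V) (s : ℝ) (v : V), ⟪A (s • v), s • v⟫ = s ^ 2 * ⟪A v, v⟫ := by
    intro A s v
    rw [map_smul, real_inner_smul_left, real_inner_smul_right]; ring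
  have key : ∀ n : ℕ,
      (τ ^ 2)⁻¹ * ⟪M (u (n + 1) - u n), u (n + 1) - u n⟫ +
        (4 : ℝ)⁻¹ * ⟪K (u (n + 1) + u n), u (n + 1) + u n⟫ =
      (τ ^ 2)⁻¹ * ⟪M (u 1 - u 0), u 1 - u 0⟫ +
        (4 : ℝ)⁻¹ * ⟪K (u 1 + u 0), u 1 + u 0⟫ := by
    intro n
    induction n with
    | zero => rfl
    | succ n ih =>
      rw [← ih]
      have hs := hscheme (n + 1) (by omega)
      simp only [Nat.add_sub_cancel] at hs
      set a := u (n + 2) with ha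
      set b := u (n + 1) with hb
      set c := u n with hc
      have h0 : (0 : ℝ) =
          ⟪M ((τ ^ 2)⁻¹ • (a - (2 : ℝ) • b + c)) + K ((4 : ℝ)⁻¹ • (a + (2 : ℝ) • b + c)),
            a - c⟫ := by
        rw [hs]; simp
      rw [inner_add_left, map_smul, map_smul, real_inner_smul_left, real_inner_smul_left] at h0
      have hM : ⟪M (a - (2 : ℝ) • b + c), a - c⟫
          = ⟪M (a - b), a - b⟫ - ⟪M (b - c), b - c⟫ := by
        have h := cross_sub' M hMsa (a - b) (b - c)
        have e1 : (a - b) - (b - c) = a - (2 : ℝ) • b + c := by module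
        have e2 : (a - b) + (b - c) = a - c := by module
        rw [e1, e2] at h; exact h
      have hK : ⟪K (a + (2 : ℝ) • b + c), a - c⟫
          = ⟪K (a + b), a + b⟫ - ⟪K (b + c), b + c⟫ := by
        have h := cross_add' K hKsa (a + b) (b + c)
        have e1 : (a + b) + (b + c) = a + (2 : ℝ) • b + c := by module
        have e2 : (a + b) - (b + c) = a - c := by module
        rw [e1, e2] at h; exact h
      rw [hM, hK] at h0
      linarith
  intro n
  have hsqM : ∀ v : V, opSemiNorm M v ^ 2 = ⟪M v, v⟫ := fun v => Real.sq_sqrt (hMnn v)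
  have hsqK : ∀ v : V, opSemiNorm K v ^ 2 = ⟪K v, v⟫ := fun v => Real.sq_sqrt (hKpsd v)
  rw [hsqM, hsqM, hsqK, hsqK, hsmul, hsmul, hsmul, hsmul]
  have e1 : (τ⁻¹) ^ 2 = (τ ^ 2)⁻¹ := by rw [inv_pow]
  have e2 : ((2 : ℝ)⁻¹) ^ 2 = (4 : ℝ)⁻¹ := by norm_num
  rw [e1, e2]
  exact key n
end

section
/- Let τ > 0, let (f^n)_{n≥1} be a sequence in V, and let (u^n)_{n≥0} be a sequence in V satisfying M (u^{n+1} − 2u^n + u^{n−1})/τ² + K (u^{n+1} + 2u^n + u^{n−1})/4 = M f^n for every n ≥ 1. Then for every n ≥ 0, |∂_t u^n|_M² + |u^{n+1/2}|_K² ≤ 2 |∂_t u^0|_M² + 2 |u^{1/2}|_K² + 4 ( Σ_{i=1}^n τ |f^i|_M )². -/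
open scoped RealInnerProductSpace

/-!
The discrete energy `E n = |∂_t u^n|_M² + |u^{n+1/2}|_K²` obeys
`E (n+1) - E n = ⟪M f^{n+1}, u^{n+2} - u^n⟫`: pair the scheme with
`u^{n+2} - u^n = τ (∂_t u^{n+1} + ∂_t u^n) = 2 (u^{n+3/2} - u^{n+1/2})`, which turns both
operator terms into differences of squares. Cauchy–Schwarz for `M` bounds the right side by
`τ |f^{n+1}|_M (√E (n+1) + √E n)`, so `√E` grows by at most `τ |f^{n+1}|_M` per step;
summing and squaring gives the estimate.
-/

lemma le_add_of_sq_sub_sq_le_mul_add {a b c : ℝ} (hb : 0 ≤ b) (hc : 0 ≤ c)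
    (h : a ^ 2 - b ^ 2 ≤ c * (a + b)) : a ≤ b + c := by
  nlinarith

lemma le_add_sum_Icc_of_le_add {e g : ℕ → ℝ} (h : ∀ n, e (n + 1) ≤ e n + g (n + 1)) (n : ℕ) :
    e n ≤ e 0 + ∑ i ∈ Finset.Icc 1 n, g i := by
  induction n with
  | zero => simp
  | succ n ih =>
    rw [Finset.sum_Icc_succ_top (by omega)]
    linarith [h n]

section OpSemiNorm

variable {V : Type*} [NormedAddCommGroup V] [InnerProductSpace ℝ V] {A : V →ₗ[ℝ] V}

lemma LinearMap.IsSymmetric.inner_map_sub_add (hA : A.IsSymmetric) (a b : V) :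
    ⟪A (a - b), a + b⟫ = ⟪A a, a⟫ - ⟪A b, b⟫ := by
  have hab : ⟪A a, b⟫ = ⟪A b, a⟫ := by rw [hA, real_inner_comm]
  rw [map_sub, inner_sub_left, inner_add_right, inner_add_right]
  linarith

lemma LinearMap.IsPositive.opSemiNorm_sq (hA : A.IsPositive) (v : V) :
    opSemiNorm A v ^ 2 = ⟪A v, v⟫ :=
  Real.sq_sqrt (hA.inner_nonneg_left v)

lemma LinearMap.IsPositive.inner_le_opSemiNorm_mul (hA : A.IsPositive) (x y : V) :
    ⟪A x, y⟫ ≤ opSemiNorm A x * opSemiNorm A y := by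
  let B : LinearMap.BilinForm ℝ V := (innerₗ V).comp A
  have hB : LinearMap.IsSymm B := ⟨fun x y => by simp [B, hA.isSymmetric x y, real_inner_comm]⟩
  have hsq : ⟪A x, y⟫ ^ 2 ≤ ⟪A x, x⟫ * ⟪A y, y⟫ :=
    B.apply_sq_le_of_symm hA.inner_nonneg_left hB x y
  calc ⟪A x, y⟫ ≤ √(⟪A x, x⟫ * ⟪A y, y⟫) := (le_abs_self _).trans (Real.abs_le_sqrt hsq)
    _ = opSemiNorm A x * opSemiNorm A y := Real.sqrt_mul (hA.inner_nonneg_left x) _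

end OpSemiNorm

section WaveEnergy

variable {V : Type*} [NormedAddCommGroup V] [InnerProductSpace ℝ V] {M K : V →ₗ[ℝ] V}
  {τ : ℝ} {f u : ℕ → V}

noncomputable def waveEnergy (M K : V →ₗ[ℝ] V) (τ : ℝ) (u : ℕ → V) (n : ℕ) : ℝ :=
  opSemiNorm M (τ⁻¹ • (u (n + 1) - u n)) ^ 2 + opSemiNorm K ((2 : ℝ)⁻¹ • (u (n + 1) + u n)) ^ 2

lemma waveEnergy_nonneg (n : ℕ) : 0 ≤ waveEnergy M K τ u n := by
  unfold waveEnergy; positivity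

lemma waveEnergy_succ_sub (hM : M.IsPositive) (hK : K.IsPositive) {n : ℕ}
    (h : M ((τ ^ 2)⁻¹ • (u (n + 2) - (2 : ℝ) • u (n + 1) + u n)) +
      K ((4 : ℝ)⁻¹ • (u (n + 2) + (2 : ℝ) • u (n + 1) + u n)) = M (f (n + 1))) :
    waveEnergy M K τ u (n + 1) - waveEnergy M K τ u n = ⟪M (f (n + 1)), u (n + 2) - u n⟫ := by
  set x := u (n + 2) - u (n + 1)
  set y := u (n + 1) - u n
  set p := u (n + 2) + u (n + 1)
  set q := u (n + 1) + u n
  have hM' : ⟪M (x - y), u (n + 2) - u n⟫ = ⟪M x, x⟫ - ⟪M y, y⟫ := by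
    rw [← hM.isSymmetric.inner_map_sub_add]; congr 1; module
  have hK' : ⟪K (p + q), u (n + 2) - u n⟫ = ⟪K p, p⟫ - ⟪K q, q⟫ := by
    rw [hK.isSymmetric, real_inner_comm, ← hK.isSymmetric.inner_map_sub_add]; congr 2; module
  have hacc : u (n + 2) - (2 : ℝ) • u (n + 1) + u n = x - y := by module
  have havg : u (n + 2) + (2 : ℝ) • u (n + 1) + u n = p + q := by module
  rw [← h, hacc, havg, inner_add_left, map_smul, map_smul, real_inner_smul_left,
    real_inner_smul_left, hM', hK']
  simp only [waveEnergy, hM.opSemiNorm_sq, hK.opSemiNorm_sq, map_smul, real_inner_smul_left,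
    real_inner_smul_right]
  ring

lemma sqrt_waveEnergy_succ_le (hM : M.IsPositive) (hK : K.IsPositive) (hτ : 0 < τ) {n : ℕ}
    (h : M ((τ ^ 2)⁻¹ • (u (n + 2) - (2 : ℝ) • u (n + 1) + u n)) +
      K ((4 : ℝ)⁻¹ • (u (n + 2) + (2 : ℝ) • u (n + 1) + u n)) = M (f (n + 1))) :
    √(waveEnergy M K τ u (n + 1)) ≤ √(waveEnergy M K τ u n) + τ * opSemiNorm M (f (n + 1)) := by
  have hdt (m : ℕ) : opSemiNorm M (τ⁻¹ • (u (m + 1) - u m)) ≤ √(waveEnergy M K τ u m) :=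
    Real.le_sqrt_of_sq_le (le_add_of_nonneg_right (sq_nonneg _))
  have hw : u (n + 2) - u n =
      τ • (τ⁻¹ • (u (n + 2) - u (n + 1)) + τ⁻¹ • (u (n + 1) - u n)) := by
    rw [smul_add, smul_inv_smul₀ hτ.ne', smul_inv_smul₀ hτ.ne']; abel
  have hf : 0 ≤ opSemiNorm M (f (n + 1)) := Real.sqrt_nonneg _
  refine le_add_of_sq_sub_sq_le_mul_add (Real.sqrt_nonneg _) (by positivity) ?_
  rw [Real.sq_sqrt (waveEnergy_nonneg _), Real.sq_sqrt (waveEnergy_nonneg _),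
    waveEnergy_succ_sub hM hK h, hw, real_inner_smul_right, inner_add_right]
  calc τ * (⟪M (f (n + 1)), τ⁻¹ • (u (n + 2) - u (n + 1))⟫ +
        ⟪M (f (n + 1)), τ⁻¹ • (u (n + 1) - u n)⟫)
      ≤ τ * (opSemiNorm M (f (n + 1)) * opSemiNorm M (τ⁻¹ • (u (n + 2) - u (n + 1))) +
        opSemiNorm M (f (n + 1)) * opSemiNorm M (τ⁻¹ • (u (n + 1) - u n))) := by
        gcongr <;> exact hM.inner_le_opSemiNorm_mul _ _
    _ ≤ τ * (opSemiNorm M (f (n + 1)) * √(waveEnergy M K τ u (n + 1)) +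
        opSemiNorm M (f (n + 1)) * √(waveEnergy M K τ u n)) := by
        gcongr
        exacts [hdt (n + 1), hdt n]
    _ = τ * opSemiNorm M (f (n + 1)) *
        (√(waveEnergy M K τ u (n + 1)) + √(waveEnergy M K τ u n)) := by ring

lemma sqrt_waveEnergy_le (hM : M.IsPositive) (hK : K.IsPositive) (hτ : 0 < τ)
    (hscheme : ∀ n : ℕ, 1 ≤ n →
      M ((τ ^ 2)⁻¹ • (u (n + 1) - (2 : ℝ) • u n + u (n - 1))) +
        K ((4 : ℝ)⁻¹ • (u (n + 1) + (2 : ℝ) • u n + u (n - 1))) = M (f n)) (n : ℕ) :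
    √(waveEnergy M K τ u n) ≤
      √(waveEnergy M K τ u 0) + ∑ i ∈ Finset.Icc 1 n, τ * opSemiNorm M (f i) :=
  le_add_sum_Icc_of_le_add (e := fun m => √(waveEnergy M K τ u m))
    (fun m => sqrt_waveEnergy_succ_le hM hK hτ (hscheme (m + 1) (Nat.le_add_left 1 m))) n

end WaveEnergy

theorem stmt3_general {V : Type*} [NormedAddCommGroup V] [InnerProductSpace ℝ V]
    (M K : V →ₗ[ℝ] V)
    (hMsa : ∀ x y : V, ⟪M x, y⟫ = ⟪x, M y⟫)
    (hMpd : ∀ x : V, x ≠ 0 → 0 < ⟪M x, x⟫)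
    (hKsa : ∀ x y : V, ⟪K x, y⟫ = ⟪x, K y⟫)
    (hKpsd : ∀ x : V, 0 ≤ ⟪K x, x⟫)
    (τ : ℝ) (hτ : 0 < τ) (f : ℕ → V) (u : ℕ → V)
    (hscheme : ∀ n : ℕ, 1 ≤ n →
      M ((τ ^ 2)⁻¹ • (u (n + 1) - (2 : ℝ) • u n + u (n - 1))) +
        K ((4 : ℝ)⁻¹ • (u (n + 1) + (2 : ℝ) • u n + u (n - 1))) = M (f n)) :
    ∀ n : ℕ,
      opSemiNorm M (τ⁻¹ • (u (n + 1) - u n)) ^ 2 +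
          opSemiNorm K ((2 : ℝ)⁻¹ • (u (n + 1) + u n)) ^ 2 ≤
        2 * opSemiNorm M (τ⁻¹ • (u 1 - u 0)) ^ 2 +
          2 * opSemiNorm K ((2 : ℝ)⁻¹ • (u 1 + u 0)) ^ 2 +
          4 * (∑ i ∈ Finset.Icc 1 n, τ * opSemiNorm M (f i)) ^ 2 := by
  have hM : M.IsPositive := M.isPositive_iff.2 ⟨hMsa, fun x => by
    rcases eq_or_ne x 0 with rfl | hx
    · simp
    · exact (hMpd x hx).le⟩
  have hK : K.IsPositive := K.isPositive_iff.2 ⟨hKsa, hKpsd⟩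
  intro n
  set S := ∑ i ∈ Finset.Icc 1 n, τ * opSemiNorm M (f i)
  have hS : 0 ≤ S := Finset.sum_nonneg fun i _ => mul_nonneg hτ.le (Real.sqrt_nonneg _)
  have hsqrt : √(waveEnergy M K τ u n) ≤ √(waveEnergy M K τ u 0) + S :=
    sqrt_waveEnergy_le hM hK hτ hscheme n
  have hE : waveEnergy M K τ u n ≤ 2 * waveEnergy M K τ u 0 + 4 * S ^ 2 := by
    rw [← Real.sq_sqrt (waveEnergy_nonneg n), ← Real.sq_sqrt (waveEnergy_nonneg 0)]
    nlinarith [pow_le_pow_left₀ (Real.sqrt_nonneg _) hsqrt 2,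
      sq_nonneg (√(waveEnergy M K τ u 0) - S)]
  unfold waveEnergy at hE
  linarith

/-- discrete stability estimate (Lemma 3.4 of the paper) for the scheme
`M (u^{n+1} − 2u^n + u^{n−1})/τ² + K (u^{n+1} + 2u^n + u^{n−1})/4 = M f^n`. -/
theorem stmt3 {V : Type*} [NormedAddCommGroup V] [InnerProductSpace ℝ V]
    [FiniteDimensional ℝ V]
    (M K : V →ₗ[ℝ] V)
    (hMsa : ∀ x y : V, ⟪M x, y⟫ = ⟪x, M y⟫)
    (hMpd : ∀ x : V, x ≠ 0 → 0 < ⟪M x, x⟫)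
    (hKsa : ∀ x y : V, ⟪K x, y⟫ = ⟪x, K y⟫)
    (hKpsd : ∀ x : V, 0 ≤ ⟪K x, x⟫)
    (τ : ℝ) (hτ : 0 < τ) (f : ℕ → V) (u : ℕ → V)
    (hscheme : ∀ n : ℕ, 1 ≤ n →
      M ((τ ^ 2)⁻¹ • (u (n + 1) - (2 : ℝ) • u n + u (n - 1))) +
        K ((4 : ℝ)⁻¹ • (u (n + 1) + (2 : ℝ) • u n + u (n - 1))) = M (f n)) :
    ∀ n : ℕ,
      opSemiNorm M (τ⁻¹ • (u (n + 1) - u n)) ^ 2 +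
          opSemiNorm K ((2 : ℝ)⁻¹ • (u (n + 1) + u n)) ^ 2 ≤
        2 * opSemiNorm M (τ⁻¹ • (u 1 - u 0)) ^ 2 +
          2 * opSemiNorm K ((2 : ℝ)⁻¹ • (u 1 + u 0)) ^ 2 +
          4 * (∑ i ∈ Finset.Icc 1 n, τ * opSemiNorm M (f i)) ^ 2 :=
  stmt3_general M K hMsa hMpd hKsa hKpsd τ hτ f u hscheme
end
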